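/- For every irreducible fraction p/q with 0 < p/q < 1 and every natural number k, m(k, p/q) = m(k, (q−p)/q); equivalently the degree distributions of the Haros graphs G_{p/q} and G_{1−p/q} coincide: P(k, p/q) = P(k, 1 − p/q) for all k. -/

import Mathlib

/-- Symbols for paths in the Farey binary tree. -/
inductive LR
  | L
  | R
deriving DecidableEq

/-- One step in the Farey binary tree: update the current pair of fractions
(represented as pairs (numerator, denominator) of naturals). -/
def fareyStep : ((ℕ × ℕ) × (ℕ × ℕ)) → LR → ((ℕ × ℕ) × (ℕ × ℕ))
  | ((a, b), (c, d)), LR.L => ((a, b), (a + c, b + d))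
  | ((a, b), (c, d)), LR.R => ((a + c, b + d), (c, d))

/-- The final pair of fractions of a word: after reading the first symbol `L`
the current pair is (0/1, 1/1); the remaining symbols update it. -/
def finalPair (w : List LR) : (ℕ × ℕ) × (ℕ × ℕ) :=
  w.tail.foldl fareyStep ((0, 1), (1, 1))

/-- The value ⟨w⟩ of a word: the mediant of its final pair, as (numerator, denominator). -/
def value (w : List LR) : ℕ × ℕ :=
  ((finalPair w).1.1 + (finalPair w).2.1, (finalPair w).1.2 + (finalPair w).2.2)

/-- A word over {L,R} is a Farey word when its first symbol is `L`. -/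
def IsFareyWord (w : List LR) : Prop := w.head? = some LR.L

/-- Concatenation of degree sequences:
[a₁,…,a_s] ⊕ [b₁,…,b_t] = [a₁+1, a₂, …, a_{s−1}, a_s+b₁, b₂, …, b_{t−1}, b_t+1]. -/
def oplus (A B : List ℕ) : List ℕ :=
  (A.dropLast.modifyHead (· + 1)) ++ [A.getLastD 0 + B.headD 0] ++ B.tail.dropLast
    ++ [B.getLastD 0 + 1]

/-- Update of the pair (D(left ancestor), D(right ancestor)) of unreduced degree
sequences along one symbol. -/
def degStep : (List ℕ × List ℕ) → LR → (List ℕ × List ℕ)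
  | (A, B), LR.L => (A, oplus A B)
  | (A, B), LR.R => (oplus A B, B)

/-- The pair (D(a/b), D(c/d)) of unreduced degree sequences of the final pair of a word;
0/1 and 1/1 are both assigned the list [1,1]. -/
def degPair (w : List LR) : List ℕ × List ℕ :=
  w.tail.foldl degStep ([1, 1], [1, 1])

/-- The unreduced degree sequence D(⟨w⟩) = D(a/b) ⊕ D(c/d) of the value of a word. -/
def Dseq (w : List LR) : List ℕ :=
  oplus (degPair w).1 (degPair w).2

/-- Reduction: [k₁,…,k_{q+1}] becomes [k₂,…,k_q, k₁+k_{q+1}]; the last entry is the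
boundary degree and the remaining ones are the inner degrees. -/
def reduce (D : List ℕ) : List ℕ :=
  D.tail.dropLast ++ [D.headD 0 + D.getLastD 0]

/-- The reduced degree sequence of the Haros graph G_{⟨w⟩}. -/
def degSeq (w : List LR) : List ℕ := reduce (Dseq w)

/-- Degree-distribution entropy S of the Haros graph G_{⟨w⟩}:
S = −Σ_k P(k)·ln P(k), summed over the degree values occurring in the reduced
degree sequence, where P(k) = m(k)/q. -/
noncomputable def Sent (w : List LR) : ℝ :=
  -∑ k ∈ (degSeq w).toFinset,
    (((degSeq w).count k : ℝ) / ((value w).2 : ℝ)) *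
      Real.log (((degSeq w).count k : ℝ) / ((value w).2 : ℝ))

/-- Reduced entropy H of the Haros graph G_{⟨w⟩} (with the convention 0·ln 0 = 0,
automatic since Real.log 0 = 0). -/
noncomputable def Hent (w : List LR) : ℝ :=
  let x : ℝ := ((value w).1 : ℝ) / ((value w).2 : ℝ)
  if x ≤ 1 / 2 then
    Sent w + 2 * x * Real.log x + (1 - 2 * x) * Real.log (1 - 2 * x)
  else
    Sent w + 2 * (1 - x) * Real.log (1 - x) + (2 * x - 1) * Real.log (2 * x - 1)

/-! Reflecting a path of the Farey tree (exchanging `L` and `R` after the initial `L`) maps the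
final pair (a/b, c/d) to (1 - c/d, 1 - a/b), hence the value p/q to (q - p)/q; since a fraction
has only one Farey path, the path of (q - p)/q is the reflection of that of p/q. On degree
sequences the same reflection reverses lists, because `(A ⊕ B).reverse = B.reverse ⊕ A.reverse`.
So the unreduced degree sequence of (q - p)/q is the reverse of that of p/q, and reduction, which
adds up the two end entries and keeps the middle ones, gives lists with the same entries. -/

def mediant (P : (ℕ × ℕ) × (ℕ × ℕ)) : ℕ × ℕ := (P.1.1 + P.2.1, P.1.2 + P.2.2)

def valFrom (P : (ℕ × ℕ) × (ℕ × ℕ)) (t : List LR) : ℕ × ℕ := mediant (t.foldl fareyStep P)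

lemma value_cons_L (t : List LR) : value (LR.L :: t) = valFrom ((0, 1), (1, 1)) t := rfl

lemma valFrom_cons (P : (ℕ × ℕ) × (ℕ × ℕ)) (s : LR) (t : List LR) :
    valFrom P (s :: t) = valFrom (fareyStep P s) t := rfl

def FracLt (x y : ℕ × ℕ) : Prop := x.1 * y.2 < y.1 * x.2

lemma FracLt.irrefl (x : ℕ × ℕ) : ¬ FracLt x x := lt_irrefl _

lemma FracLt.asymm {x y : ℕ × ℕ} (h : FracLt x y) : ¬ FracLt y x := lt_asymm h

lemma FracLt.trans {x y z : ℕ × ℕ} (hxy : FracLt x y) (hyz : FracLt y z) : FracLt x z := by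
  unfold FracLt at *
  have hx : 0 < x.2 := Nat.pos_of_ne_zero fun h0 => by simp [h0] at hxy
  refine Nat.lt_of_mul_lt_mul_right (a := y.2) ?_
  calc x.1 * z.2 * y.2 = x.1 * y.2 * z.2 := by ring
    _ ≤ y.1 * x.2 * z.2 := Nat.mul_le_mul_right _ hxy.le
    _ = x.2 * (y.1 * z.2) := by ring
    _ < x.2 * (z.1 * y.2) := Nat.mul_lt_mul_of_pos_left hyz hx
    _ = z.1 * x.2 * y.2 := by ring

def IsFareyPair (P : (ℕ × ℕ) × (ℕ × ℕ)) : Prop :=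
  P.1.2 * P.2.1 = P.1.1 * P.2.2 + 1 ∧ P.1.1 < P.1.2 ∧ P.2.1 ≤ P.2.2

lemma isFareyPair_init : IsFareyPair ((0, 1), (1, 1)) := ⟨rfl, Nat.one_pos, le_rfl⟩

namespace IsFareyPair

variable {P : (ℕ × ℕ) × (ℕ × ℕ)}

lemma step (h : IsFareyPair P) (s : LR) : IsFareyPair (fareyStep P s) := by
  obtain ⟨⟨a, b⟩, ⟨c, d⟩⟩ := P
  obtain ⟨hdet, hab, hcd⟩ := h
  cases s <;> simp only [fareyStep, IsFareyPair] at *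
  · exact ⟨by rw [Nat.mul_add, Nat.mul_add, hdet]; ring, hab, by omega⟩
  · exact ⟨by rw [Nat.add_mul, Nat.add_mul, hdet]; ring, by omega, hcd⟩

lemma foldl (h : IsFareyPair P) (t : List LR) : IsFareyPair (t.foldl fareyStep P) := by
  induction t generalizing P with
  | nil => exact h
  | cons s t ih => exact ih (h.step s)

lemma left_lt_mediant (h : IsFareyPair P) : FracLt P.1 (mediant P) := by
  obtain ⟨⟨a, b⟩, ⟨c, d⟩⟩ := P
  obtain ⟨hdet, -, -⟩ := h
  simp only [FracLt, mediant] at *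
  nlinarith

lemma mediant_lt_right (h : IsFareyPair P) : FracLt (mediant P) P.2 := by
  obtain ⟨⟨a, b⟩, ⟨c, d⟩⟩ := P
  obtain ⟨hdet, -, -⟩ := h
  simp only [FracLt, mediant] at *
  nlinarith

lemma valFrom_between (h : IsFareyPair P) (t : List LR) :
    FracLt P.1 (valFrom P t) ∧ FracLt (valFrom P t) P.2 := by
  induction t generalizing P with
  | nil => exact ⟨h.left_lt_mediant, h.mediant_lt_right⟩
  | cons s t ih =>
    obtain ⟨hleft, hright⟩ := ih (h.step s)
    rw [valFrom_cons]
    cases s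
    · exact ⟨hleft, hright.trans h.mediant_lt_right⟩
    · exact ⟨h.left_lt_mediant.trans hleft, hright⟩

lemma valFrom_L_lt_mediant (h : IsFareyPair P) (t : List LR) :
    FracLt (valFrom P (LR.L :: t)) (mediant P) :=
  ((h.step LR.L).valFrom_between t).2

lemma mediant_lt_valFrom_R (h : IsFareyPair P) (t : List LR) :
    FracLt (mediant P) (valFrom P (LR.R :: t)) :=
  ((h.step LR.R).valFrom_between t).1

/-- Uniqueness of Farey paths: the first symbol of a path is read off from the position of its
value relative to the mediant. -/
theorem valFrom_injective (h : IsFareyPair P) : Function.Injective (valFrom P) := by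
  intro t t' he
  induction t generalizing P t' with
  | nil =>
    rcases t' with _ | ⟨_ | _, r'⟩
    · rfl
    · exact absurd (he ▸ h.valFrom_L_lt_mediant r') (FracLt.irrefl _)
    · exact absurd (he ▸ h.mediant_lt_valFrom_R r') (FracLt.irrefl _)
  | cons s r ih =>
    rcases t' with _ | ⟨s', r'⟩
    · cases s
      · exact absurd (he ▸ h.valFrom_L_lt_mediant r) (FracLt.irrefl _)
      · exact absurd (he ▸ h.mediant_lt_valFrom_R r) (FracLt.irrefl _)
    · cases s <;> cases s'
      · rw [ih (h.step LR.L) he]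
      · exact ((h.valFrom_L_lt_mediant r).asymm (he ▸ h.mediant_lt_valFrom_R r')).elim
      · exact ((h.mediant_lt_valFrom_R r).asymm (he ▸ h.valFrom_L_lt_mediant r')).elim
      · rw [ih (h.step LR.R) he]

end IsFareyPair

def LR.swap : LR → LR
  | LR.L => LR.R
  | LR.R => LR.L

/-- The pair (1 - c/d, 1 - a/b) reflecting the pair (a/b, c/d). -/
def mirrorPair (P : (ℕ × ℕ) × (ℕ × ℕ)) : (ℕ × ℕ) × (ℕ × ℕ) :=
  ((P.2.2 - P.2.1, P.2.2), (P.1.2 - P.1.1, P.1.2))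

namespace IsFareyPair

variable {P : (ℕ × ℕ) × (ℕ × ℕ)}

lemma fareyStep_mirrorPair (h : IsFareyPair P) (s : LR) :
    fareyStep (mirrorPair P) s.swap = mirrorPair (fareyStep P s) := by
  obtain ⟨⟨a, b⟩, ⟨c, d⟩⟩ := P
  obtain ⟨-, hab, hcd⟩ := h
  dsimp only at hab hcd
  cases s <;> simp only [fareyStep, mirrorPair, LR.swap, Prod.mk.injEq, and_true, true_and] <;>
    omega

lemma foldl_mirrorPair (h : IsFareyPair P) (t : List LR) :
    (t.map LR.swap).foldl fareyStep (mirrorPair P) = mirrorPair (t.foldl fareyStep P) := by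
  induction t generalizing P with
  | nil => rfl
  | cons s t ih =>
    rw [List.map_cons, List.foldl_cons, List.foldl_cons, h.fareyStep_mirrorPair s]
    exact ih (h.step s)

lemma mediant_mirrorPair (h : IsFareyPair P) :
    mediant (mirrorPair P) = ((mediant P).2 - (mediant P).1, (mediant P).2) := by
  obtain ⟨⟨a, b⟩, ⟨c, d⟩⟩ := P
  obtain ⟨-, hab, hcd⟩ := h
  dsimp only at hab hcd
  simp only [mediant, mirrorPair, Prod.mk.injEq]
  omega

end IsFareyPair

lemma valFrom_map_swap (t : List LR) :
    valFrom ((0, 1), (1, 1)) (t.map LR.swap) =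
      ((valFrom ((0, 1), (1, 1)) t).2 - (valFrom ((0, 1), (1, 1)) t).1,
        (valFrom ((0, 1), (1, 1)) t).2) := by
  have hinit : mirrorPair ((0, 1), (1, 1)) = ((0, 1), (1, 1)) := rfl
  rw [valFrom, ← hinit, isFareyPair_init.foldl_mirrorPair t, hinit,
    (isFareyPair_init.foldl t).mediant_mirrorPair, valFrom]

lemma exists_eq_cons_append_singleton {α : Type*} {l : List α} (h : 2 ≤ l.length) :
    ∃ a m b, l = a :: (m ++ [b]) := by
  obtain _ | ⟨a, _ | ⟨x, r⟩⟩ := l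
  · simp at h
  · simp at h
  · exact ⟨a, (x :: r).dropLast, (x :: r).getLast (List.cons_ne_nil x r),
      by rw [List.dropLast_append_getLast]⟩

lemma oplus_cons_append (a a' b b' : ℕ) (as bs : List ℕ) :
    oplus (a :: (as ++ [a'])) (b :: (bs ++ [b'])) =
      (a + 1) :: (as ++ (a' + b) :: (bs ++ [b' + 1])) := by
  rw [oplus, ← List.cons_append, List.dropLast_concat, List.getLastD_concat, List.tail_cons,
    List.dropLast_concat, List.headD_cons, ← List.cons_append, List.getLastD_concat,
    List.modifyHead_cons]
  simp

lemma reverse_oplus {A B : List ℕ} (hA : 2 ≤ A.length) (hB : 2 ≤ B.length) :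
    (oplus A B).reverse = oplus B.reverse A.reverse := by
  obtain ⟨a, as, a', rfl⟩ := exists_eq_cons_append_singleton hA
  obtain ⟨b, bs, b', rfl⟩ := exists_eq_cons_append_singleton hB
  have hrev (x y : ℕ) (m : List ℕ) : (x :: (m ++ [y])).reverse = y :: (m.reverse ++ [x]) := by
    simp
  rw [oplus_cons_append, hrev, hrev, oplus_cons_append]
  simp [Nat.add_comm]

lemma two_le_length_oplus {A B : List ℕ} (hA : 2 ≤ A.length) (hB : 2 ≤ B.length) :
    2 ≤ (oplus A B).length := by
  obtain ⟨a, as, a', rfl⟩ := exists_eq_cons_append_singleton hA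
  obtain ⟨b, bs, b', rfl⟩ := exists_eq_cons_append_singleton hB
  rw [oplus_cons_append]
  simp only [List.length_cons, List.length_append]
  omega

def reversePair (X : List ℕ × List ℕ) : List ℕ × List ℕ := (X.2.reverse, X.1.reverse)

section DegreeSequences

variable {X : List ℕ × List ℕ}

lemma two_le_length_degStep (h : 2 ≤ X.1.length ∧ 2 ≤ X.2.length) (s : LR) :
    2 ≤ (degStep X s).1.length ∧ 2 ≤ (degStep X s).2.length := by
  obtain ⟨A, B⟩ := X
  cases s
  · exact ⟨h.1, two_le_length_oplus h.1 h.2⟩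
  · exact ⟨two_le_length_oplus h.1 h.2, h.2⟩

lemma two_le_length_foldl_degStep (h : 2 ≤ X.1.length ∧ 2 ≤ X.2.length) (t : List LR) :
    2 ≤ (t.foldl degStep X).1.length ∧ 2 ≤ (t.foldl degStep X).2.length := by
  induction t generalizing X with
  | nil => exact h
  | cons s t ih => exact ih (two_le_length_degStep h s)

lemma degStep_reversePair (h : 2 ≤ X.1.length ∧ 2 ≤ X.2.length) (s : LR) :
    degStep (reversePair X) s.swap = reversePair (degStep X s) := by
  obtain ⟨A, B⟩ := X
  cases s <;> simp only [degStep, reversePair, LR.swap, reverse_oplus h.1 h.2]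

lemma foldl_degStep_reversePair (h : 2 ≤ X.1.length ∧ 2 ≤ X.2.length) (t : List LR) :
    (t.map LR.swap).foldl degStep (reversePair X) = reversePair (t.foldl degStep X) := by
  induction t generalizing X with
  | nil => rfl
  | cons s t ih =>
    rw [List.map_cons, List.foldl_cons, List.foldl_cons, degStep_reversePair h s]
    exact ih (two_le_length_degStep h s)

end DegreeSequences

lemma two_le_length_degPair (w : List LR) :
    2 ≤ (degPair w).1.length ∧ 2 ≤ (degPair w).2.length :=
  two_le_length_foldl_degStep (X := ([1, 1], [1, 1])) ⟨le_rfl, le_rfl⟩ _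

lemma two_le_length_Dseq (w : List LR) : 2 ≤ (Dseq w).length :=
  two_le_length_oplus (two_le_length_degPair w).1 (two_le_length_degPair w).2

lemma Dseq_map_swap (t : List LR) : Dseq (LR.L :: t.map LR.swap) = (Dseq (LR.L :: t)).reverse := by
  have hpair : degPair (LR.L :: t.map LR.swap) = reversePair (degPair (LR.L :: t)) :=
    foldl_degStep_reversePair (X := ([1, 1], [1, 1])) ⟨le_rfl, le_rfl⟩ t
  obtain ⟨hA, hB⟩ := two_le_length_degPair (LR.L :: t)
  rw [Dseq, hpair, Dseq, reverse_oplus hA hB]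
  rfl

lemma reduce_cons_append (x y : ℕ) (m : List ℕ) : reduce (x :: (m ++ [y])) = m ++ [x + y] := by
  rw [reduce, List.tail_cons, List.dropLast_concat, List.headD_cons, ← List.cons_append,
    List.getLastD_concat]

lemma count_reduce_reverse {D : List ℕ} (h : 2 ≤ D.length) (k : ℕ) :
    (reduce D.reverse).count k = (reduce D).count k := by
  obtain ⟨x, m, y, rfl⟩ := exists_eq_cons_append_singleton h
  rw [show (x :: (m ++ [y])).reverse = y :: (m.reverse ++ [x]) by simp,
    reduce_cons_append, reduce_cons_append]
  simp [List.count_append, List.count_reverse, Nat.add_comm]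

theorem statement1_general (p q : ℕ) (w w' : List LR) (hw : IsFareyWord w) (hw' : IsFareyWord w')
    (hval : value w = (p, q)) (hval' : value w' = (q - p, q)) (k : ℕ) :
    (degSeq w).count k = (degSeq w').count k := by
  obtain ⟨t, rfl⟩ := List.head?_eq_some_iff.mp hw
  obtain ⟨t', rfl⟩ := List.head?_eq_some_iff.mp hw'
  have hmirror : t' = t.map LR.swap := by
    apply isFareyPair_init.valFrom_injective
    rw [← value_cons_L, hval', valFrom_map_swap, ← value_cons_L, hval]
  rw [hmirror, degSeq, degSeq, Dseq_map_swap, count_reduce_reverse (two_le_length_Dseq _)]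

/-- the degree distributions of the Haros graphs G_{p/q} and G_{(q−p)/q}
coincide: m(k, p/q) = m(k, (q−p)/q) for every k. -/
theorem statement1 (p q : ℕ) (hcop : Nat.Coprime p q) (hp : 0 < p) (hpq : p < q)
    (w w' : List LR) (hw : IsFareyWord w) (hw' : IsFareyWord w')
    (hval : value w = (p, q)) (hval' : value w' = (q - p, q)) (k : ℕ) :
    (degSeq w).count k = (degSeq w').count k :=
  statement1_general p q w w' hw hw' hval hval' k
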